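/- Let 𝒦 be the set of real symmetric positive semidefinite N×N matrices W with Tr W = N, let 𝔾 be the affine subspace of real symmetric N×N matrices with all diagonal entries equal to 1, and let 𝒢 = 𝒦 ∩ 𝔾 be the Gram set. For every face ℱ of 𝒢, let ℱ̄ denote the smallest face of 𝒦 containing ℱ (the intersection of all faces of 𝒦 containing ℱ). Then ℱ̄ ∩ 𝔾 = ℱ. -/

import Mathlib

open Matrix

/-- `F` is a face of the convex set `C`: a convex subset such that whenever a point of `F`
is a proper convex combination of two points of `C`, both points belong to `F`. -/
def IsFace {V : Type*} [AddCommGroup V] [Module ℝ V] (C F : Set V) : Prop :=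
  F ⊆ C ∧ Convex ℝ F ∧
    ∀ x ∈ F, ∀ y ∈ C, ∀ z ∈ C, ∀ α : ℝ, 0 < α → α < 1 →
      x = α • y + (1 - α) • z → y ∈ F ∧ z ∈ F

/-- `𝒦`: real symmetric positive semidefinite `N × N` matrices of trace `N`. -/
def KSet (N : ℕ) : Set (Matrix (Fin N) (Fin N) ℝ) :=
  {W | W.PosSemidef ∧ W.trace = (N : ℝ)}

/-- `𝔾`: real symmetric `N × N` matrices with unit diagonal. -/
def GSlice (N : ℕ) : Set (Matrix (Fin N) (Fin N) ℝ) :=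
  {G | G.IsSymm ∧ ∀ i, G i i = 1}

/-- The Gram set `𝒢 = 𝒦 ∩ 𝔾`. -/
def GramSet (N : ℕ) : Set (Matrix (Fin N) (Fin N) ℝ) := KSet N ∩ GSlice N

/-! For convex `C`, an affine subspace `A` and a face `F` of `C ∩ A`, let `F'` be the set of
`y ∈ C` such that the segment from `y` through some `x ∈ F` extends past `x` inside `C`, to
`w = x + t (x - y)`. This `F'` is a face of `C` containing `F`. If moreover `y ∈ A`, then `w ∈ A`,
so `x` lies in the open segment `(y, w)` of `C ∩ A` and the face property of `F` gives `y ∈ F`.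
Hence `F' ∩ A = F`, and so the smallest face of `C` containing `F` meets `A` in `F`. -/

section GeneratedFace

variable {V : Type*} [AddCommGroup V] [Module ℝ V] {C F : Set V}

def generatedFace (C F : Set V) : Set V :=
  {y | y ∈ C ∧ ∃ x ∈ F, ∃ t : ℝ, 0 < t ∧ x + t • (x - y) ∈ C}

theorem subset_generatedFace (hFC : F ⊆ C) : F ⊆ generatedFace C F :=
  fun x hx => ⟨hFC hx, x, hx, 1, one_pos, by simpa using hFC hx⟩

theorem Convex.add_smul_sub_mem_of_le (hC : Convex ℝ C) {x y : V} {s t : ℝ} (hy : y ∈ C)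
    (hxt : x + t • (x - y) ∈ C) (hs : 0 ≤ s) (hst : s ≤ t) : x + s • (x - y) ∈ C := by
  have ht : 0 < 1 + t := by linarith
  convert hC hy hxt (a := (t - s) / (1 + t)) (b := (1 + s) / (1 + t))
    (div_nonneg (by linarith) ht.le) (div_nonneg (by linarith) ht.le) (by field_simp; ring)
    using 1
  match_scalars <;> field_simp; ring

theorem convex_generatedFace (hC : Convex ℝ C) (hF : Convex ℝ F) :
    Convex ℝ (generatedFace C F) := by
  rintro y₁ ⟨hy₁, x₁, hx₁, t₁, ht₁, hw₁⟩ y₂ ⟨hy₂, x₂, hx₂, t₂, ht₂, hw₂⟩ a b ha hb hab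
  have hw₁' := hC.add_smul_sub_mem_of_le hy₁ hw₁ (lt_min ht₁ ht₂).le (min_le_left t₁ t₂)
  have hw₂' := hC.add_smul_sub_mem_of_le hy₂ hw₂ (lt_min ht₁ ht₂).le (min_le_right t₁ t₂)
  refine ⟨hC hy₁ hy₂ ha hb hab, a • x₁ + b • x₂, hF hx₁ hx₂ ha hb hab, min t₁ t₂,
    lt_min ht₁ ht₂, ?_⟩
  convert hC hw₁' hw₂' ha hb hab using 1
  module

theorem mem_generatedFace_of_combo_mem (hC : Convex ℝ C) {y u v : V} {γ : ℝ}
    (hy : y ∈ generatedFace C F) (hu : u ∈ C) (hv : v ∈ C) (hγ₀ : 0 < γ) (hγ₁ : γ < 1)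
    (hyuv : y = γ • u + (1 - γ) • v) : u ∈ generatedFace C F := by
  obtain ⟨-, x, hx, t, ht, hw⟩ := hy
  have hD : 0 < 1 + t * (1 - γ) := by nlinarith
  -- the segment from `u` through `x` extends to `(w + t (1 - γ) v) / (1 + t (1 - γ)) ∈ [w, v]`,
  -- where `w = x + t (x - y)`
  refine ⟨hu, x, hx, γ * t / (1 + t * (1 - γ)), by positivity, ?_⟩
  convert hC hw hv (a := 1 / (1 + t * (1 - γ))) (b := t * (1 - γ) / (1 + t * (1 - γ)))
    (by positivity) (div_nonneg (mul_nonneg ht.le (sub_nonneg.2 hγ₁.le)) hD.le) (by field_simp)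
    using 1
  subst hyuv
  match_scalars <;> field_simp <;> ring

theorem isFace_generatedFace (hC : Convex ℝ C) (hF : Convex ℝ F) :
    IsFace C (generatedFace C F) := by
  refine ⟨fun y hy => hy.1, convex_generatedFace hC hF, ?_⟩
  intro y hy u hu v hv γ hγ₀ hγ₁ hyuv
  refine ⟨mem_generatedFace_of_combo_mem hC hy hu hv hγ₀ hγ₁ hyuv,
    mem_generatedFace_of_combo_mem hC hy hv hu (γ := 1 - γ) (by linarith) (by linarith) ?_⟩
  rw [hyuv, sub_sub_cancel, add_comm]

theorem IsFace.generatedFace_inter_subset {A : AffineSubspace ℝ V} (hF : IsFace (C ∩ A) F) :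
    generatedFace C F ∩ A ⊆ F := by
  rintro y ⟨⟨hyC, x, hx, t, ht, hw⟩, hyA⟩
  have hxA : x ∈ A := (hF.1 hx).2
  have hwA : x + t • (x - y) ∈ A := by
    convert AffineMap.lineMap_mem (1 + t) hyA hxA using 1
    rw [AffineMap.lineMap_apply_module]
    module
  refine (hF.2.2 x hx y ⟨hyC, hyA⟩ _ ⟨hw, hwA⟩ (t / (1 + t)) (by positivity)
    ((div_lt_one (by positivity)).2 (by linarith)) ?_).1
  match_scalars <;> field_simp <;> ring

theorem IsFace.sInter_isFace_supset_inter_eq (hC : Convex ℝ C) {A : AffineSubspace ℝ V}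
    (hF : IsFace (C ∩ A) F) : (⋂₀ {F' | IsFace C F' ∧ F ⊆ F'}) ∩ A = F := by
  refine Set.Subset.antisymm (fun y hy => hF.generatedFace_inter_subset ⟨?_, hy.2⟩)
    fun x hx => ⟨fun F' hF' => hF'.2 hx, (hF.1 hx).2⟩
  have hFC : F ⊆ C := fun x hx => (hF.1 hx).1
  exact hy.1 _ ⟨isFace_generatedFace hC hF.2.1, subset_generatedFace hFC⟩

end GeneratedFace

theorem convex_KSet (N : ℕ) : Convex ℝ (KSet N) := by
  rintro W₁ ⟨hW₁, htr₁⟩ W₂ ⟨hW₂, htr₂⟩ a b ha hb hab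
  refine ⟨(hW₁.smul ha).add (hW₂.smul hb), ?_⟩
  rw [trace_add, trace_smul, trace_smul, htr₁, htr₂, smul_eq_mul, smul_eq_mul, ← add_mul, hab,
    one_mul]

def gSliceAffineSubspace (N : ℕ) : AffineSubspace ℝ (Matrix (Fin N) (Fin N) ℝ) where
  carrier := GSlice N
  smul_vsub_vadd_mem' c p₁ p₂ p₃ h₁ h₂ h₃ := by
    refine ⟨?_, fun i => ?_⟩
    · simp only [vsub_eq_sub, vadd_eq_add, IsSymm, transpose_add, transpose_smul,
        transpose_sub, h₁.1.eq, h₂.1.eq, h₃.1.eq]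
    · simp [h₁.2 i, h₂.2 i, h₃.2 i]

/-- The smallest face of `𝒦` containing a face `ℱ` of `𝒢`, intersected with `𝔾`,
returns `ℱ` itself. -/
theorem face_extension_restriction (N : ℕ) (F : Set (Matrix (Fin N) (Fin N) ℝ))
    (hF : IsFace (GramSet N) F) :
    (⋂₀ {F' | IsFace (KSet N) F' ∧ F ⊆ F'}) ∩ GSlice N = F :=
  IsFace.sInter_isFace_supset_inter_eq (A := gSliceAffineSubspace N) (convex_KSet N) hF
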